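/- arXiv:1401.2115 — 3 statements merged into one kernel-verified Lean document; each statement's English description precedes it below -/
import Mathlib

section
/- Let α > 0, c₁ > 0 and let c₂, d, k₀ be real constants. Define f : ℝ² → ℝ (for u ≠ 0, U ≠ 0) by f(u,U) = −√(c₁/(2α)) · tanh( √(α/(2c₁)) · ( c₁·ln|u| + c₂·ln|U| + d·u·U + k₀ ) ). Then for every u ≠ 0 and U ≠ 0, f satisfies the recurrence system f(u,U)²·α·(d·u·U/c₁ + 1) − c₁/2 − d·u·U/2 − u·(∂f/∂u)(u,U) = 0 and f(u,U)²·α·(d·u·U/c₁ + c₂/c₁) − c₂/2 − d·u·U/2 − U·(∂f/∂U)(u,U) = 0, where ∂f/∂u denotes the derivative of the function u ↦ f(u,U) and ∂f/∂U the derivative of U ↦ f(u,U). -/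
/-!
Write `f = -a · tanh (b · φ)` with `a = √(c₁/(2α))`, `b = √(α/(2c₁))`, so that `a b = 1/2` and
`b / a = α / c₁`. Since `tanh' = 1 - tanh²`, `f` obeys the Riccati relation
`f' = (α/c₁ · f² - 1/2) · φ'`, and the phase `φ = c₁ log|u| + c₂ log|U| + d u U + k₀` has Euler
derivatives `u ∂ᵤφ = c₁ + d u U` and `U ∂_U φ = c₂ + d u U`. Both equations are the product of
these two facts.
-/

open Real

theorem Real.hasDerivAt_tanh (x : ℝ) : HasDerivAt tanh (1 - tanh x ^ 2) x := by
  have hquot := (hasDerivAt_sinh x).div (hasDerivAt_cosh x) (cosh_pos x).ne'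
  rw [show sinh / cosh = tanh from funext fun y => (tanh_eq_sinh_div_cosh y).symm] at hquot
  refine hquot.congr_deriv ?_
  rw [tanh_eq_sinh_div_cosh]
  field_simp [(cosh_pos x).ne']

theorem hasDerivAt_neg_mul_tanh_mul {g : ℝ → ℝ} {g' x : ℝ} (a b : ℝ) (ha : a ≠ 0)
    (hg : HasDerivAt g g' x) :
    HasDerivAt (fun y => -a * tanh (b * g y))
      ((b / a * (-a * tanh (b * g x)) ^ 2 - a * b) * g') x := by
  refine (((hasDerivAt_tanh (b * g x)).comp x (hg.const_mul b)).const_mul (-a)).congr_deriv ?_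
  field_simp
  ring

theorem Real.hasDerivAt_log_abs {x : ℝ} (hx : x ≠ 0) : HasDerivAt (fun y => log |y|) x⁻¹ x := by
  simpa only [log_abs] using hasDerivAt_log hx

noncomputable def walkerPhase (c₁ c₂ d k₀ u U : ℝ) : ℝ :=
  c₁ * log |u| + c₂ * log |U| + d * u * U + k₀

theorem hasDerivAt_walkerPhase_left (c₁ c₂ d k₀ : ℝ) {u : ℝ} (hu : u ≠ 0) (U : ℝ) :
    HasDerivAt (fun u => walkerPhase c₁ c₂ d k₀ u U) (c₁ * u⁻¹ + d * U) u := by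
  refine ((((hasDerivAt_log_abs hu).const_mul c₁).add_const _).add
    (((hasDerivAt_id u).const_mul d).mul_const U)).add_const k₀ |>.congr_deriv ?_
  simp

theorem hasDerivAt_walkerPhase_right (c₁ c₂ d k₀ u : ℝ) {U : ℝ} (hU : U ≠ 0) :
    HasDerivAt (fun U => walkerPhase c₁ c₂ d k₀ u U) (c₂ * U⁻¹ + d * u) U := by
  refine ((((hasDerivAt_log_abs hU).const_mul c₂).const_add _).add
    ((hasDerivAt_id U).const_mul (d * u))).add_const k₀ |>.congr_deriv ?_
  simp

/-- The function
`f(u,U) = −√(c₁/(2α)) · tanh( √(α/(2c₁)) · ( c₁·ln|u| + c₂·ln|U| + d·u·U + k₀ ) )`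
satisfies the recurrent-vector system for the non-Kundt Walker VSI metric of Example 1. -/
theorem stmt_0 (α c₁ c₂ d k₀ : ℝ) (hα : 0 < α) (hc₁ : 0 < c₁)
    (f : ℝ → ℝ → ℝ)
    (hf : ∀ u U : ℝ, f u U =
      -Real.sqrt (c₁ / (2 * α)) *
        Real.tanh (Real.sqrt (α / (2 * c₁)) *
          (c₁ * Real.log |u| + c₂ * Real.log |U| + d * u * U + k₀))) :
    ∀ u U : ℝ, u ≠ 0 → U ≠ 0 →
      (f u U) ^ 2 * α * (d * u * U / c₁ + 1) - c₁ / 2 - d * u * U / 2 -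
          u * deriv (fun u' => f u' U) u = 0 ∧
      (f u U) ^ 2 * α * (d * u * U / c₁ + c₂ / c₁) - c₂ / 2 - d * u * U / 2 -
          U * deriv (fun U' => f u U') U = 0 := by
  intro u U hu hU
  set a := √(c₁ / (2 * α))
  set b := √(α / (2 * c₁))
  have ha : a ≠ 0 := (sqrt_pos.2 (by positivity)).ne'
  have hab : a * b = 1 / 2 := by
    rw [← sqrt_mul (by positivity), show c₁ / (2 * α) * (α / (2 * c₁)) = (1 / 2) ^ 2 by
      field_simp, sqrt_sq (by norm_num)]
  have hba : b / a = α / c₁ := by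
    rw [← sqrt_div' _ (by positivity), show α / (2 * c₁) / (c₁ / (2 * α)) = (α / c₁) ^ 2 by
      field_simp, sqrt_sq (by positivity)]
  obtain rfl : f = fun u U => -a * tanh (b * walkerPhase c₁ c₂ d k₀ u U) :=
    funext₂ hf
  rw [(hasDerivAt_neg_mul_tanh_mul a b ha (hasDerivAt_walkerPhase_left c₁ c₂ d k₀ hu U)).deriv,
    (hasDerivAt_neg_mul_tanh_mul a b ha (hasDerivAt_walkerPhase_right c₁ c₂ d k₀ u hU)).deriv,
    hab, hba]
  constructor <;> field_simp <;> ring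
end

section
/- Let a, α, c₂, d be real constants and let Ω = {(u,U) ∈ ℝ² : u ≠ 0 and U ≠ 0}. Suppose f : ℝ² → ℝ is nowhere zero on Ω, is differentiable in each variable at every point of Ω, and satisfies on Ω the system f²·(a·U + α/u) − c₂/(2u) − d·U/2 − ∂f/∂u = 0 and f²·(a·u + α/U) − c₂/(2U) − d·u/2 − ∂f/∂U = 0. Then the function h = 1/f satisfies on Ω the system h²·(1/2)·(d·U + c₂/u) − a·U − α/u − ∂h/∂u = 0 and h²·(1/2)·(d·u + c₂/U) − a·u − α/U − ∂h/∂U = 0. -/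
/-- If `f` is nowhere zero on `Ω = {u ≠ 0, U ≠ 0}`, differentiable in each
variable there, and satisfies the recurrent-vector system for `∂_v + f·∂_V`, then
`h = 1/f` satisfies the recurrent-vector system for `h·∂_v + ∂_V`. -/
theorem stmt_2 (a α c₂ d : ℝ) (f : ℝ → ℝ → ℝ)
    (hf_ne : ∀ u U : ℝ, u ≠ 0 → U ≠ 0 → f u U ≠ 0)
    (hdiff_u : ∀ u U : ℝ, u ≠ 0 → U ≠ 0 → DifferentiableAt ℝ (fun u' => f u' U) u)
    (hdiff_U : ∀ u U : ℝ, u ≠ 0 → U ≠ 0 → DifferentiableAt ℝ (fun U' => f u U') U)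
    (heq1 : ∀ u U : ℝ, u ≠ 0 → U ≠ 0 →
      (f u U) ^ 2 * (a * U + α / u) - c₂ / (2 * u) - d * U / 2 -
        deriv (fun u' => f u' U) u = 0)
    (heq2 : ∀ u U : ℝ, u ≠ 0 → U ≠ 0 →
      (f u U) ^ 2 * (a * u + α / U) - c₂ / (2 * U) - d * u / 2 -
        deriv (fun U' => f u U') U = 0) :
    ∀ u U : ℝ, u ≠ 0 → U ≠ 0 →
      (1 / f u U) ^ 2 * (1 / 2) * (d * U + c₂ / u) - a * U - α / u -
          deriv (fun u' => 1 / f u' U) u = 0 ∧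
      (1 / f u U) ^ 2 * (1 / 2) * (d * u + c₂ / U) - a * u - α / U -
          deriv (fun U' => 1 / f u U') U = 0 := by
  intro u U hu hU
  have hfne := hf_ne u U hu hU
  have h1 : deriv (fun u' => 1 / f u' U) u = -deriv (fun u' => f u' U) u / f u U ^ 2 := by
    simp only [one_div]
    exact deriv_inv'' (hdiff_u u U hu hU) hfne
  have h2 : deriv (fun U' => 1 / f u U') U = -deriv (fun U' => f u U') U / f u U ^ 2 := by
    simp only [one_div]
    exact deriv_inv'' (hdiff_U u U hu hU) hfne
  have e1 : deriv (fun u' => f u' U) u =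
      (f u U) ^ 2 * (a * U + α / u) - c₂ / (2 * u) - d * U / 2 := by
    have := heq1 u U hu hU; linarith
  have e2 : deriv (fun U' => f u U') U =
      (f u U) ^ 2 * (a * u + α / U) - c₂ / (2 * U) - d * u / 2 := by
    have := heq2 u U hu hU; linarith
  rw [h1, h2, e1, e2]
  constructor <;> (field_simp; ring)
end

section
/- Let α > 0, c₁ > 0 and c₂, d, k₀ ∈ ℝ, and for u ≠ 0, U ≠ 0 set X = c₁·ln|u| + c₂·ln|U| + d·u·U + k₀ and f_{k₀}(u,U) = −√(c₁/(2α)) · tanh( √(α/(2c₁)) · X ). If f_{k₀}(u,U) ≠ 0, then the complex number (2α/c₁) · ( −√(c₁/(2α)) ) · tanh( √(α/(2c₁))·X + (π/2)·i ) (with tanh the complex hyperbolic tangent applied to the complex argument) is real and equals 1 / f_{k₀}(u,U). -/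
/-!
Shifting the argument of `tanh` by `iπ/2` exchanges `sinh` and `cosh` up to the same factor `i`,
so `tanh (z + iπ/2) = coth z`. The prefactor `2α/c₁` is `s⁻²` for `s = √(c₁/(2α))`, hence
`(2α/c₁)·(-s)·coth y = 1/(-s·tanh y)`.
-/

open Complex Real in
theorem Complex.tanh_add_pi_div_two_mul_I (z : ℂ) : tanh (z + π / 2 * I) = (tanh z)⁻¹ := by
  have hsinh : sinh (z + π / 2 * I) = I * cosh z := by
    rw [sinh_add, sinh_mul_I, cosh_mul_I, cos_pi_div_two, sin_pi_div_two]
    ring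
  have hcosh : cosh (z + π / 2 * I) = I * sinh z := by
    rw [cosh_add, sinh_mul_I, cosh_mul_I, cos_pi_div_two, sin_pi_div_two]
    ring
  rw [tanh_eq_sinh_div_cosh, tanh_eq_sinh_div_cosh, hsinh, hcosh, inv_div,
    mul_div_mul_left _ _ I_ne_zero]

theorem Real.inv_mul_neg_sqrt_mul_inv (x t : ℝ) : x⁻¹ * -√x * t⁻¹ = 1 / (-√x * t) := by
  rw [mul_neg, inv_mul_eq_div, sqrt_div_self, one_div, mul_inv, neg_inv]

theorem stmt_7_general (α c₁ X fval : ℝ)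
    (hfval : fval = -Real.sqrt (c₁ / (2 * α)) *
      Real.tanh (Real.sqrt (α / (2 * c₁)) * X)) :
    ((2 * α / c₁ : ℝ) : ℂ) * ((-Real.sqrt (c₁ / (2 * α)) : ℝ) : ℂ) *
        Complex.tanh (((Real.sqrt (α / (2 * c₁)) * X : ℝ) : ℂ) +
          ((Real.pi / 2 : ℝ) : ℂ) * Complex.I)
      = ((1 / fval : ℝ) : ℂ) := by
  set y := Real.sqrt (α / (2 * c₁)) * X
  have hreal : (2 * α / c₁) * -Real.sqrt (c₁ / (2 * α)) * (Real.tanh y)⁻¹ = 1 / fval := by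
    rw [hfval, ← inv_div, Real.inv_mul_neg_sqrt_mul_inv]
  rw [← hreal]
  push_cast
  rw [Complex.tanh_add_pi_div_two_mul_I]

/-- Under the shift `k₀' = k₀ + iπ√(c₁/(2α))`, the complex quantity
`(2α/c₁)·(−√(c₁/(2α)))·tanh(√(α/(2c₁))·X + (π/2)·i)` is real and equals
`1/f_{k₀}(u,U)`. -/
theorem stmt_7 (α c₁ c₂ d k₀ u U X fval : ℝ) (hα : 0 < α) (hc₁ : 0 < c₁)
    (hu : u ≠ 0) (hU : U ≠ 0)
    (hX : X = c₁ * Real.log |u| + c₂ * Real.log |U| + d * u * U + k₀)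
    (hfval : fval = -Real.sqrt (c₁ / (2 * α)) *
      Real.tanh (Real.sqrt (α / (2 * c₁)) * X))
    (hf0 : fval ≠ 0) :
    ((2 * α / c₁ : ℝ) : ℂ) * ((-Real.sqrt (c₁ / (2 * α)) : ℝ) : ℂ) *
        Complex.tanh (((Real.sqrt (α / (2 * c₁)) * X : ℝ) : ℂ) +
          ((Real.pi / 2 : ℝ) : ℂ) * Complex.I)
      = ((1 / fval : ℝ) : ℂ) :=
  stmt_7_general α c₁ X fval hfval
end
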